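/- For all real x with |x| < 1 and real a, the hypergeometric series ₂F₁(a, a+1/2; 1/2; x²) = Σ_{n≥0} ((a)_n (a+1/2)_n / ((1/2)_n n!)) x^{2n} equals (1/2)[(1+x)^{-2a} + (1-x)^{-2a}]. -/

import Mathlib

/-!
By the binomial series, `(1 - y)^(-2a) = ∑ (2a)ₘ / m! · yᵐ` for `|y| < 1`. Averaging this at
`y = x` and `y = -x` kills the odd powers, and the duplication formulas
`(2a)₂ₙ = 4ⁿ (a)ₙ (a + 1/2)ₙ` and `(2n)! = 4ⁿ (1/2)ₙ n!` turn the even coefficients into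
those of `₂F₁(a, a + 1/2; 1/2; x²)`.
-/

/-- Pochhammer (rising factorial) for real `a`. -/
noncomputable def poch (a : ℝ) (n : ℕ) : ℝ := (ascPochhammer ℝ n).eval a

lemma poch_succ (a : ℝ) (n : ℕ) : poch a (n + 1) = poch a n * (a + n) :=
  ascPochhammer_succ_eval n a

lemma poch_one (n : ℕ) : poch 1 n = n.factorial := (Nat.cast_factorial ℝ n).symm

lemma poch_two_mul (a : ℝ) (n : ℕ) :
    poch (2 * a) (2 * n) = 4 ^ n * poch a n * poch (a + 1/2) n := by
  induction n with
  | zero => simp [poch]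
  | succ k ih =>
    rw [Nat.mul_succ, poch_succ, poch_succ, ih, poch_succ, poch_succ]
    push_cast
    ring

lemma factorial_two_mul (n : ℕ) :
    ((2 * n).factorial : ℝ) = 4 ^ n * poch (1/2) n * n.factorial := by
  rw [← poch_one, ← poch_one]
  convert poch_two_mul (1/2) n using 3 <;> norm_num

lemma choose_add_sub_one_eq_poch_div_factorial (c : ℝ) (n : ℕ) :
    Ring.choose (c + n - 1) n = poch c n / n.factorial := by
  rw [← Ring.multichoose_eq, eq_div_iff (by positivity), mul_comm, ← nsmul_eq_mul,
    Ring.factorial_nsmul_multichoose_eq_ascPochhammer, Polynomial.ascPochhammer_smeval_eq_eval,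
    poch]

lemma hasSum_poch_div_factorial_mul_pow (c : ℝ) {y : ℝ} (hy : |y| < 1) :
    HasSum (fun n ↦ poch c n / n.factorial * y ^ n) ((1 - y) ^ (-c)) := by
  have hy' : y ∈ Metric.eball (0 : ℝ) 1 := by
    simpa [mem_eball_zero_iff, Real.enorm_eq_ofReal_abs] using hy
  have := (Real.one_div_one_sub_rpow_hasFPowerSeriesOnBall_zero c).hasSum hy'
  simpa [FormalMultilinearSeries.ofScalars_apply_eq, choose_add_sub_one_eq_poch_div_factorial,
    Real.rpow_neg (sub_nonneg.2 (abs_lt.1 hy).2.le), mul_comm] using this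

lemma poch_two_mul_div_factorial_two_mul (a : ℝ) (n : ℕ) :
    poch (2 * a) (2 * n) / (2 * n).factorial
      = poch a n * poch (a + 1/2) n / (poch (1/2) n * n.factorial) := by
  rw [poch_two_mul, factorial_two_mul, mul_assoc, mul_assoc, mul_div_mul_left _ _ (by positivity)]

lemma HasSum.even_part {𝕜 : Type*} [Field 𝕜] [CharZero 𝕜] [TopologicalSpace 𝕜]
    [IsTopologicalRing 𝕜] {f : ℕ → 𝕜} {x a b : 𝕜}
    (ha : HasSum (fun n ↦ f n * x ^ n) a) (hb : HasSum (fun n ↦ f n * (-x) ^ n) b) :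
    HasSum (fun k ↦ f (2 * k) * x ^ (2 * k)) ((a + b) / 2) := by
  have hodd : ∀ n ∉ Set.range (2 * ·), f n * x ^ n + f n * (-x) ^ n = 0 := by
    intro n hn
    have : Odd n := Nat.not_even_iff_odd.1 fun ⟨k, hk⟩ ↦ hn ⟨k, by simp only; omega⟩
    rw [this.neg_pow, mul_neg, add_neg_cancel]
  have hsum := ((mul_right_injective₀ two_ne_zero).hasSum_iff hodd).2 (ha.add hb)
  convert hsum.div_const 2 using 1
  ext k
  simp [(even_two_mul k).neg_pow]

/-- Bailey: `₂F₁(a, a+1/2; 1/2; x²) = (1/2)[(1+x)^{-2a} + (1-x)^{-2a}]` for `|x| < 1`. -/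
theorem stmt0 (a x : ℝ) (hx : |x| < 1) :
    ∑' n : ℕ, poch a n * poch (a + 1/2) n / (poch (1/2) n * n.factorial) * x ^ (2 * n)
      = (1/2) * ((1 + x) ^ (-(2 * a)) + (1 - x) ^ (-(2 * a))) := by
  have hminus := hasSum_poch_div_factorial_mul_pow (2 * a) hx
  have hplus := hasSum_poch_div_factorial_mul_pow (2 * a) (y := -x) (by rwa [abs_neg])
  rw [sub_neg_eq_add] at hplus
  simp_rw [← poch_two_mul_div_factorial_two_mul]
  rw [(hminus.even_part hplus).tsum_eq]
  ring
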